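/- arXiv:1611.08490 — 3 statements merged into one kernel-verified Lean document; each statement's English description precedes it below -/
import Mathlib

section
/- For every z ∈ ℂ with |z| ≤ r, the map τ(z) : A_r → [0,∞) is a multiplicative seminorm on A_r bounded by ‖·‖_{hyb,r}. -/
/-- The hybrid norm on `ℂ`: `|c|_hyb = max {1, |c|}` for `c ≠ 0`, and `|0|_hyb = 0`. -/
noncomputable def hybNorm (c : ℂ) : ℝ := if c = 0 then 0 else max 1 (‖c‖)

/-- The ring `A_r` of formal Laurent series `f = ∑ aₙ tⁿ` with
`∑ |aₙ|_hyb rⁿ < ∞`, viewed as a subset of `ℂ((t))`. -/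
def Ar (r : ℝ) : Set (LaurentSeries ℂ) :=
  {f | Summable fun n : ℤ => hybNorm (f.coeff n) * r ^ n}

/-- The hybrid norm `‖f‖_{hyb,r} = ∑ |aₙ|_hyb rⁿ` of a Laurent series. -/
noncomputable def hybnorm (r : ℝ) (f : LaurentSeries ℂ) : ℝ :=
  ∑' n : ℤ, hybNorm (f.coeff n) * r ^ n

open scoped Classical

/-- The sum of the Laurent series of `f` at a point `z ∈ ℂ`. -/
noncomputable def lEval (f : LaurentSeries ℂ) (z : ℂ) : ℂ :=
  ∑' n : ℤ, f.coeff n * z ^ n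

/-- The seminorm `τ(z)` on `A_r`: for `z = 0` it is `f ↦ r^{ord₀ f}` (with `0 ↦ 0`),
and for `0 < |z| ≤ r` it is `f ↦ |f(z)|^{log r / log |z|}`. -/
noncomputable def tau (r : ℝ) (z : ℂ) (f : LaurentSeries ℂ) : ℝ :=
  if z = 0 then (if f = 0 then 0 else r ^ f.order)
  else ‖lEval f z‖ ^ (Real.log r / Real.log (‖z‖))

/-- `N` is a multiplicative seminorm on the subset `S` of `ℂ((t))` (relativized to `S`):
`N 0 = 0`, `N 1 = 1`, `N` is nonnegative, multiplicative and subadditive on `S`. -/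
def IsMultSeminormOn (S : Set (LaurentSeries ℂ)) (N : LaurentSeries ℂ → ℝ) : Prop :=
  N 0 = 0 ∧ N 1 = 1 ∧ (∀ f ∈ S, 0 ≤ N f) ∧
    (∀ f ∈ S, ∀ g ∈ S, N (f * g) = N f * N g) ∧
    (∀ f ∈ S, ∀ g ∈ S, N (f + g) ≤ N f + N g)

/-!
At `z = 0`, `τ(0)` is the `t`-adic absolute value `r ^ ord₀`; it is non-archimedean because
`ord₀ (f + g) ≥ min (ord₀ f) (ord₀ g)` and `r ≤ 1`, and it is bounded by the leading term of
`‖f‖_{hyb,r}`.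

For `z ≠ 0` put `p = log_{|z|} r ∈ (0, 1]`, so that `|z| ^ p = r`. The Laurent series of
`f ∈ A_r` converges absolutely at `z`, as `|aₙ zⁿ| ≤ (|z| / r) ^ ord₀ f · |aₙ|_hyb rⁿ`; hence
evaluation at `z` is a ring homomorphism on `A_r`, and `w ↦ |w| ^ p` is a multiplicative seminorm
on `ℂ` since `p ≤ 1`. Termwise `|aₙ zⁿ| ^ p = |aₙ| ^ p rⁿ ≤ |aₙ|_hyb rⁿ`, and subadditivity of
`x ↦ x ^ p` gives the bound.
-/

open HahnSeries

lemma norm_le_hybNorm (c : ℂ) : ‖c‖ ≤ hybNorm c := by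
  unfold hybNorm
  split_ifs with hc
  · simp [hc]
  · exact le_max_right _ _

lemma hybNorm_nonneg (c : ℂ) : 0 ≤ hybNorm c :=
  (norm_nonneg c).trans (norm_le_hybNorm c)

lemma one_le_hybNorm {c : ℂ} (hc : c ≠ 0) : 1 ≤ hybNorm c := by
  rw [hybNorm, if_neg hc]
  exact le_max_left _ _

lemma rpow_norm_le_hybNorm (c : ℂ) {p : ℝ} (hp0 : 0 < p) (hp1 : p ≤ 1) :
    ‖c‖ ^ p ≤ hybNorm c := by
  rcases eq_or_ne c 0 with rfl | hc
  · simp [hybNorm, Real.zero_rpow hp0.ne']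
  rcases le_total ‖c‖ 1 with h | h
  · exact (Real.rpow_le_one (norm_nonneg c) h hp0.le).trans (one_le_hybNorm hc)
  · exact (Real.rpow_le_self_of_one_le h hp1).trans (norm_le_hybNorm c)

lemma hybnorm_nonneg {r : ℝ} (hr : 0 ≤ r) (f : LaurentSeries ℂ) : 0 ≤ hybnorm r f :=
  tsum_nonneg fun n => mul_nonneg (hybNorm_nonneg _) (zpow_nonneg hr n)

lemma Real.rpow_tsum_le_tsum_rpow {ι : Type*} {x : ι → ℝ} (hx : ∀ i, 0 ≤ x i)
    (hsx : Summable x) {p : ℝ} (hp0 : 0 < p) (hp1 : p ≤ 1)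
    (hsp : Summable fun i => x i ^ p) : (∑' i, x i) ^ p ≤ ∑' i, x i ^ p := by
  have hfin (s : Finset ι) : (∑ i ∈ s, x i) ^ p ≤ ∑ i ∈ s, x i ^ p :=
    Finset.le_sum_of_subadditive_on_pred (· ^ p) (0 ≤ ·) (Real.zero_rpow hp0.ne').le
      (fun a b ha hb => Real.rpow_add_le_add_rpow ha hb hp0.le hp1)
      (fun _ _ => add_nonneg) x fun i _ => hx i
  have hlim : Filter.Tendsto (fun s : Finset ι => (∑ i ∈ s, x i) ^ p) Filter.atTop
      (nhds ((∑' i, x i) ^ p)) :=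
    (Real.continuousAt_rpow_const _ p (Or.inr hp0.le)).tendsto.comp hsx.hasSum
  exact le_of_tendsto hlim (Filter.Eventually.of_forall fun s =>
    (hfin s).trans (hsp.sum_le_tsum s fun i _ => Real.rpow_nonneg (hx i) p))

lemma summable_norm_coeff_mul_zpow {r : ℝ} (hr : 0 < r) {z : ℂ} (hz0 : z ≠ 0) (hzr : ‖z‖ ≤ r)
    {f : LaurentSeries ℂ} (hf : f ∈ Ar r) :
    Summable fun n : ℤ => ‖f.coeff n * z ^ n‖ := by
  have hq : 0 < ‖z‖ / r := div_pos (norm_pos_iff.mpr hz0) hr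
  refine (hf.mul_left ((‖z‖ / r) ^ f.order)).of_nonneg_of_le (fun n => norm_nonneg _)
    fun n => ?_
  rcases eq_or_ne (f.coeff n) 0 with h | h
  · simp [h, hybNorm]
  have hzn : ‖z‖ ^ n = (‖z‖ / r) ^ n * r ^ n := by
    rw [div_zpow, div_mul_cancel₀ _ (zpow_ne_zero _ hr.ne')]
  have hle : (‖z‖ / r) ^ n ≤ (‖z‖ / r) ^ f.order :=
    zpow_le_zpow_right_of_le_one₀ hq ((div_le_one hr).mpr hzr) (order_le_of_coeff_ne_zero h)
  calc ‖f.coeff n * z ^ n‖ = ‖f.coeff n‖ * ((‖z‖ / r) ^ n * r ^ n) := by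
        rw [norm_mul, norm_zpow, hzn]
    _ ≤ hybNorm (f.coeff n) * ((‖z‖ / r) ^ f.order * r ^ n) := by
        gcongr
        · exact hybNorm_nonneg _
        · exact norm_le_hybNorm _
    _ = (‖z‖ / r) ^ f.order * (hybNorm (f.coeff n) * r ^ n) := by ring

lemma lEval_zero (z : ℂ) : lEval 0 z = 0 := by
  simp [lEval]

lemma lEval_one (z : ℂ) : lEval 1 z = 1 := by
  simp [lEval, coeff_one]

lemma lEval_add {z : ℂ} {f g : LaurentSeries ℂ}
    (hf : Summable fun n : ℤ => ‖f.coeff n * z ^ n‖)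
    (hg : Summable fun n : ℤ => ‖g.coeff n * z ^ n‖) :
    lEval (f + g) z = lEval f z + lEval g z := by
  simp only [lEval, coeff_add, add_mul]
  exact hf.of_norm.tsum_add hg.of_norm

lemma tsum_fiber_add_coeff_mul_coeff (f g : LaurentSeries ℂ) (n : ℤ) :
    ∑' p : (fun p : ℤ × ℤ => p.1 + p.2) ⁻¹' {n}, f.coeff p.1.1 * g.coeff p.1.2 =
      (f * g).coeff n := by
  rw [tsum_subtype _ fun p : ℤ × ℤ => f.coeff p.1 * g.coeff p.2, coeff_mul,
     tsum_eq_sum (s := Finset.antidiagonal f.isPWO_support g.isPWO_support n)]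
  · refine Finset.sum_congr rfl fun p hp => Set.indicator_of_mem ?_ _
    simpa using (Finset.mem_antidiagonal.mp hp).2.2
  · intro p hp
    by_cases hpn : p.1 + p.2 = n
    · rw [Set.indicator_of_mem (by simpa using hpn)]
      by_contra hne
      exact hp (Finset.mem_antidiagonal.mpr
        ⟨left_ne_zero_of_mul hne, right_ne_zero_of_mul hne, hpn⟩)
    · exact Set.indicator_of_notMem (by simpa using hpn) _

lemma lEval_mul {z : ℂ} (hz : z ≠ 0) {f g : LaurentSeries ℂ}
    (hf : Summable fun n : ℤ => ‖f.coeff n * z ^ n‖)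
    (hg : Summable fun n : ℤ => ‖g.coeff n * z ^ n‖) :
    lEval (f * g) z = lEval f z * lEval g z := by
  have hsum := summable_mul_of_summable_norm (R := ℂ) hf hg
  have hprod := (HasSum.mul (f := fun n : ℤ => f.coeff n * z ^ n)
    (g := fun n : ℤ => g.coeff n * z ^ n) hf.of_norm.hasSum hg.of_norm.hasSum hsum).tsum_fiberwise
    fun p : ℤ × ℤ => p.1 + p.2
  refine (hprod.congr_fun fun n => ?_).tsum_eq
  calc (f * g).coeff n * z ^ n
      = ∑' p : (fun p : ℤ × ℤ => p.1 + p.2) ⁻¹' {n}, f.coeff p.1.1 * g.coeff p.1.2 * z ^ n := by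
        rw [tsum_mul_right, tsum_fiber_add_coeff_mul_coeff]
    _ = _ := by
        refine tsum_congr fun p => ?_
        have hp : p.1.1 + p.1.2 = n := p.2
        rw [show z ^ n = z ^ p.1.1 * z ^ p.1.2 by rw [← zpow_add₀ hz, hp]]
        ring

lemma isMultSeminormOn_rpow_norm {S : Set (LaurentSeries ℂ)} {φ : LaurentSeries ℂ → ℂ} {p : ℝ}
    (hp0 : 0 < p) (hp1 : p ≤ 1) (h0 : φ 0 = 0) (h1 : φ 1 = 1)
    (hmul : ∀ f ∈ S, ∀ g ∈ S, φ (f * g) = φ f * φ g)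
    (hadd : ∀ f ∈ S, ∀ g ∈ S, φ (f + g) = φ f + φ g) :
    IsMultSeminormOn S fun f => ‖φ f‖ ^ p := by
  refine ⟨by simp [h0, Real.zero_rpow hp0.ne'], by simp [h1], fun f _ => by positivity,
    fun f hf g hg => ?_, fun f hf g hg => ?_⟩
  · simp only [hmul f hf g hg, norm_mul, Real.mul_rpow (norm_nonneg _) (norm_nonneg _)]
  · calc ‖φ (f + g)‖ ^ p ≤ (‖φ f‖ + ‖φ g‖) ^ p := by
          rw [hadd f hf g hg]
          gcongr
          exact norm_add_le _ _
      _ ≤ ‖φ f‖ ^ p + ‖φ g‖ ^ p :=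
          Real.rpow_add_le_add_rpow (norm_nonneg _) (norm_nonneg _) hp0.le hp1

lemma rpow_norm_lEval_le_hybnorm {r : ℝ} (hr : 0 < r) {z : ℂ} (hz0 : z ≠ 0) (hzr : ‖z‖ ≤ r)
    {p : ℝ} (hp0 : 0 < p) (hp1 : p ≤ 1) (hzp : ‖z‖ ^ p = r) {f : LaurentSeries ℂ}
    (hf : f ∈ Ar r) : ‖lEval f z‖ ^ p ≤ hybnorm r f := by
  have hF := summable_norm_coeff_mul_zpow hr hz0 hzr hf
  have hterm (n : ℤ) : ‖f.coeff n * z ^ n‖ ^ p ≤ hybNorm (f.coeff n) * r ^ n := by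
    rw [norm_mul, norm_zpow, Real.mul_rpow (norm_nonneg _) (zpow_nonneg (norm_nonneg _) _),
      ← Real.rpow_zpow_comm (norm_nonneg _), hzp]
    gcongr
    exact rpow_norm_le_hybNorm _ hp0 hp1
  have hsp : Summable fun n : ℤ => ‖f.coeff n * z ^ n‖ ^ p :=
    hf.of_nonneg_of_le (fun n => Real.rpow_nonneg (norm_nonneg _) _) hterm
  calc ‖lEval f z‖ ^ p ≤ (∑' n : ℤ, ‖f.coeff n * z ^ n‖) ^ p := by
        gcongr
        exact norm_tsum_le_tsum_norm hF
    _ ≤ ∑' n : ℤ, ‖f.coeff n * z ^ n‖ ^ p :=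
        Real.rpow_tsum_le_tsum_rpow (fun n => norm_nonneg _) hF hp0 hp1 hsp
    _ ≤ hybnorm r f := hsp.tsum_le_tsum hterm hf

noncomputable def orderNorm (r : ℝ) (f : LaurentSeries ℂ) : ℝ :=
  if f = 0 then 0 else r ^ f.order

lemma orderNorm_nonneg {r : ℝ} (hr : 0 ≤ r) (f : LaurentSeries ℂ) : 0 ≤ orderNorm r f := by
  unfold orderNorm
  split_ifs
  exacts [le_rfl, zpow_nonneg hr _]

lemma orderNorm_mul {r : ℝ} (hr : r ≠ 0) (f g : LaurentSeries ℂ) :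
    orderNorm r (f * g) = orderNorm r f * orderNorm r g := by
  rcases eq_or_ne f 0 with rfl | hf
  · simp [orderNorm]
  rcases eq_or_ne g 0 with rfl | hg
  · simp [orderNorm]
  rw [orderNorm, orderNorm, orderNorm, if_neg (mul_ne_zero hf hg), if_neg hf, if_neg hg,
    order_mul hf hg, zpow_add₀ hr]

lemma orderNorm_add_le_max {r : ℝ} (hr0 : 0 < r) (hr1 : r ≤ 1) (f g : LaurentSeries ℂ) :
    orderNorm r (f + g) ≤ max (orderNorm r f) (orderNorm r g) := by
  rcases eq_or_ne (f + g) 0 with hfg | hfg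
  · rw [hfg, orderNorm, if_pos rfl]
    exact (orderNorm_nonneg hr0.le f).trans (le_max_left _ _)
  rcases eq_or_ne f 0 with rfl | hf
  · simp
  rcases eq_or_ne g 0 with rfl | hg
  · simp
  rw [orderNorm, orderNorm, orderNorm, if_neg hfg, if_neg hf, if_neg hg]
  have hmin : r ^ (f + g).order ≤ r ^ min f.order g.order :=
    zpow_le_zpow_right_of_le_one₀ hr0 hr1 (min_order_le_order_add hfg)
  rcases le_total f.order g.order with h | h
  · exact (min_eq_left h ▸ hmin).trans (le_max_left _ _)
  · exact (min_eq_right h ▸ hmin).trans (le_max_right _ _)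

lemma isMultSeminormOn_orderNorm {r : ℝ} (hr0 : 0 < r) (hr1 : r ≤ 1)
    (S : Set (LaurentSeries ℂ)) :
    IsMultSeminormOn S (orderNorm r) :=
  ⟨by simp [orderNorm], by simp [orderNorm], fun f _ => orderNorm_nonneg hr0.le f,
    fun f _ g _ => orderNorm_mul hr0.ne' f g,
    fun f _ g _ => (orderNorm_add_le_max hr0 hr1 f g).trans
      (max_le_add_of_nonneg (orderNorm_nonneg hr0.le f) (orderNorm_nonneg hr0.le g))⟩

lemma orderNorm_le_hybnorm {r : ℝ} (hr : 0 < r) {f : LaurentSeries ℂ} (hf : f ∈ Ar r) :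
    orderNorm r f ≤ hybnorm r f := by
  rw [orderNorm]
  split_ifs with hf0
  · exact hybnorm_nonneg hr.le f
  calc r ^ f.order ≤ hybNorm (f.coeff f.order) * r ^ f.order :=
        le_mul_of_one_le_left (zpow_nonneg hr.le _)
          (one_le_hybNorm (coeff_order_eq_zero.not.mpr hf0))
    _ ≤ hybnorm r f :=
        hf.le_tsum f.order fun n _ => mul_nonneg (hybNorm_nonneg _) (zpow_nonneg hr.le n)

lemma tau_zero (r : ℝ) : tau r 0 = orderNorm r :=
  funext fun _ => if_pos rfl

lemma tau_of_ne_zero (r : ℝ) {z : ℂ} (hz : z ≠ 0) :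
    tau r z = fun f => ‖lEval f z‖ ^ Real.logb ‖z‖ r :=
  funext fun _ => if_neg hz

/-- For every `z` with `|z| ≤ r`, the map `τ(z)` is a multiplicative
seminorm on `A_r` bounded by `‖·‖_{hyb,r}`. -/
theorem tau_isMultSeminorm (r : ℝ) (hr0 : 0 < r) (hr1 : r < 1)
    (z : ℂ) (hz : ‖z‖ ≤ r) :
    IsMultSeminormOn (Ar r) (tau r z) ∧ ∀ f ∈ Ar r, tau r z f ≤ hybnorm r f := by
  rcases eq_or_ne z 0 with rfl | hz0
  · rw [tau_zero]
    exact ⟨isMultSeminormOn_orderNorm hr0 hr1.le _, fun f hf => orderNorm_le_hybnorm hr0 hf⟩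
  have hz1 : ‖z‖ < 1 := hz.trans_lt hr1
  have hzpos : 0 < ‖z‖ := norm_pos_iff.mpr hz0
  have hp0 : 0 < Real.logb ‖z‖ r := Real.logb_pos_of_base_lt_one hzpos hz1 hr0 hr1
  have hp1 : Real.logb ‖z‖ r ≤ 1 := by
    rwa [Real.logb_le_iff_le_rpow_of_base_lt_one hzpos hz1 hr0, Real.rpow_one]
  have hzp : ‖z‖ ^ Real.logb ‖z‖ r = r := Real.rpow_logb hzpos hz1.ne hr0
  have hsum {f : LaurentSeries ℂ} (hf : f ∈ Ar r) := summable_norm_coeff_mul_zpow hr0 hz0 hz hf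
  rw [tau_of_ne_zero r hz0]
  exact ⟨isMultSeminormOn_rpow_norm hp0 hp1 (lEval_zero z) (lEval_one z)
      (fun f hf g hg => lEval_mul hz0 (hsum hf) (hsum hg))
      (fun f hf g hg => lEval_add (hsum hf) (hsum hg)),
    fun f hf => rpow_norm_lEval_le_hybnorm hr0 hz0 hz hp0 hp1 hzp hf⟩
end

section
/- The map τ is injective: if z, w ∈ D̄_r and z ≠ w, then there exists f ∈ A_r with τ(z)(f) ≠ τ(w)(f). -/
open scoped Classical

/-!
For `a ≠ 0` in the disk, the Laurent polynomial `t - a` lies in `A_r` and `τ(b)(t - a) = 0` holds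
exactly for `b = a`: `τ(0)` vanishes only at `0`, while for `0 < |b| ≤ r < 1` the exponent
`log r / log |b|` is nonzero, so `τ(b)(f) = 0` iff `f(b) = 0`. Of two distinct points one, say
`z`, is nonzero, and `t - z` separates them.
-/

open HahnSeries

lemma mem_Ar_of_coeff_eq_zero {r : ℝ} {f : LaurentSeries ℂ} (s : Finset ℤ)
    (hs : ∀ n ∉ s, f.coeff n = 0) : f ∈ Ar r :=
  summable_of_ne_finset_zero (s := s) fun n hn => by simp [hs n hn, hybNorm]

lemma lEval_eq_sum_of_coeff_eq_zero {f : LaurentSeries ℂ} (s : Finset ℤ)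
    (hs : ∀ n ∉ s, f.coeff n = 0) (z : ℂ) : lEval f z = ∑ n ∈ s, f.coeff n * z ^ n :=
  tsum_eq_sum fun n hn => by simp [hs n hn]

lemma tau_zero_eq_zero_iff {r : ℝ} (hr : r ≠ 0) {f : LaurentSeries ℂ} :
    tau r 0 f = 0 ↔ f = 0 := by
  by_cases hf : f = 0 <;> simp [tau, hf, zpow_ne_zero _ hr]

lemma tau_eq_zero_iff {r : ℝ} (hr0 : 0 < r) (hr1 : r ≠ 1) {z : ℂ} (hz0 : z ≠ 0)
    (hz1 : ‖z‖ ≠ 1) {f : LaurentSeries ℂ} : tau r z f = 0 ↔ lEval f z = 0 := by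
  have hexp : Real.log r / Real.log ‖z‖ ≠ 0 :=
    div_ne_zero (Real.log_ne_zero_of_pos_of_ne_one hr0 hr1)
      (Real.log_ne_zero_of_pos_of_ne_one (norm_pos_iff.2 hz0) hz1)
  rw [tau, if_neg hz0, Real.rpow_eq_zero (norm_nonneg _) hexp, norm_eq_zero]

noncomputable def XSubC (a : ℂ) : LaurentSeries ℂ := single 1 1 - single 0 a

lemma coeff_XSubC_eq_zero (a : ℂ) {n : ℤ} (hn : n ∉ ({0, 1} : Finset ℤ)) :
    (XSubC a).coeff n = 0 := by
  simp only [Finset.mem_insert, Finset.mem_singleton, not_or] at hn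
  simp [XSubC, hn.1, hn.2]

lemma XSubC_ne_zero (a : ℂ) : XSubC a ≠ 0 := fun h => by
  simpa [XSubC] using congrArg (fun f : LaurentSeries ℂ => f.coeff 1) h

lemma XSubC_mem_Ar (r : ℝ) (a : ℂ) : XSubC a ∈ Ar r :=
  mem_Ar_of_coeff_eq_zero _ fun _ => coeff_XSubC_eq_zero a

lemma lEval_XSubC (a z : ℂ) : lEval (XSubC a) z = z - a := by
  rw [lEval_eq_sum_of_coeff_eq_zero _ (fun _ => coeff_XSubC_eq_zero a)]
  simp [XSubC, coeff_single, neg_add_eq_sub]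

lemma tau_XSubC_eq_zero_iff {r : ℝ} (hr0 : 0 < r) (hr1 : r < 1) {a b : ℂ} (ha : a ≠ 0)
    (hb : ‖b‖ ≤ r) : tau r b (XSubC a) = 0 ↔ b = a := by
  rcases eq_or_ne b 0 with rfl | hb0
  · simp only [tau_zero_eq_zero_iff hr0.ne', XSubC_ne_zero, false_iff]
    exact ha.symm
  · rw [tau_eq_zero_iff hr0 hr1.ne hb0 (by linarith), lEval_XSubC, sub_eq_zero]

/-- The map `τ` is injective on the closed disk of radius `r`:
distinct points give distinct seminorms on `A_r`. -/
theorem tau_injective (r : ℝ) (hr0 : 0 < r) (hr1 : r < 1)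
    (z w : ℂ) (hz : ‖z‖ ≤ r) (hw : ‖w‖ ≤ r) (hzw : z ≠ w) :
    ∃ f ∈ Ar r, tau r z f ≠ tau r w f := by
  wlog hz0 : z ≠ 0 generalizing z w
  · have hw0 : w ≠ 0 := fun hw0 => hzw (by rw [not_not.1 hz0, hw0])
    obtain ⟨f, hf, hne⟩ := this w z hw hz hzw.symm hw0
    exact ⟨f, hf, hne.symm⟩
  refine ⟨XSubC z, XSubC_mem_Ar r z, fun h => hzw ?_⟩
  have hzero : tau r z (XSubC z) = 0 := (tau_XSubC_eq_zero_iff hr0 hr1 hz0 hz).2 rfl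
  exact ((tau_XSubC_eq_zero_iff hr0 hr1 hz0 hw).1 (h ▸ hzero)).symm
end

section
/- Every multiplicative seminorm N on A_r that is bounded by ‖·‖_{hyb,r} satisfies N(t) = r, where t denotes the Laurent series t ∈ A_r. -/
open scoped Classical

/-! `t` is a unit of `A_r` with inverse `t⁻¹`. The bound by the hybrid norm gives `N(t) ≤ r` and
`N(t⁻¹) ≤ r⁻¹`, while multiplicativity gives `N(t) N(t⁻¹) = 1`, so both bounds are equalities. -/

lemma hasSum_hybNorm_single (r : ℝ) (n : ℤ) (c : ℂ) :
    HasSum (fun m : ℤ => hybNorm ((HahnSeries.single n c).coeff m) * r ^ m)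
      (hybNorm c * r ^ n) := by
  convert hasSum_ite_eq n (hybNorm c * r ^ n) using 2 with m
  by_cases hmn : m = n <;> simp [hmn, hybNorm]

lemma single_mem_Ar (r : ℝ) (n : ℤ) (c : ℂ) : HahnSeries.single n c ∈ Ar r :=
  (hasSum_hybNorm_single r n c).summable

lemma hybnorm_single (r : ℝ) (n : ℤ) (c : ℂ) :
    hybnorm r (HahnSeries.single n c) = hybNorm c * r ^ n :=
  (hasSum_hybNorm_single r n c).tsum_eq

lemma hybNorm_one : hybNorm 1 = 1 := by
  simp [hybNorm]

lemma eq_of_mul_eq_one_of_le_of_le_inv {a b x : ℝ} (ha : 0 ≤ a) (hab : a * b = 1)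
    (hax : a ≤ x) (hbx : b ≤ x⁻¹) : a = x := by
  have hb : 0 < b := pos_of_mul_pos_right (hab ▸ one_pos) ha
  have hxb : x ≤ b⁻¹ := by simpa using inv_anti₀ hb hbx
  rw [eq_inv_of_mul_eq_one_left hab] at hax ⊢
  exact hax.antisymm hxb

theorem seminorm_t_eq_r_general (r : ℝ)
    (N : LaurentSeries ℂ → ℝ) (hN : IsMultSeminormOn (Ar r) N)
    (hbd : ∀ f ∈ Ar r, N f ≤ hybnorm r f) :
    N (HahnSeries.single (1 : ℤ) (1 : ℂ)) = r := by
  obtain ⟨-, hN1, hN_nonneg, hN_mul, -⟩ := hN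
  set t : LaurentSeries ℂ := HahnSeries.single 1 1
  set s : LaurentSeries ℂ := HahnSeries.single (-1) 1
  have ht : t ∈ Ar r := single_mem_Ar r 1 1
  have hs : s ∈ Ar r := single_mem_Ar r (-1) 1
  have hts : t * s = 1 := by simp [t, s, HahnSeries.single_mul_single]
  refine eq_of_mul_eq_one_of_le_of_le_inv (b := N s) (hN_nonneg t ht) ?_ ?_ ?_
  · rw [← hN_mul t ht s hs, hts, hN1]
  · simpa [t, hybnorm_single, hybNorm_one] using hbd t ht
  · simpa [s, hybnorm_single, hybNorm_one] using hbd s hs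

/-- Every multiplicative seminorm on `A_r` bounded by `‖·‖_{hyb,r}`
sends the Laurent series `t` to `r`. -/
theorem seminorm_t_eq_r (r : ℝ) (hr0 : 0 < r) (hr1 : r < 1)
    (N : LaurentSeries ℂ → ℝ) (hN : IsMultSeminormOn (Ar r) N)
    (hbd : ∀ f ∈ Ar r, N f ≤ hybnorm r f) :
    N (HahnSeries.single (1 : ℤ) (1 : ℂ)) = r :=
  seminorm_t_eq_r_general r N hN hbd
end
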